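/- Let Λ ⊂ ℝⁿ be a lattice, A ⪰ 0 with Λ ⊂ ran(A), and t ≥ 1. Then ρ_{A/t²}(Λ \ {0}) ≤ ρ_A(Λ \ {0}) / ⌊t⌋. -/

import Mathlib

open Real Matrix

/-- `Ap` is the Moore–Penrose pseudoinverse of `A`. -/
def IsMoorePenrose {n : ℕ} (A Ap : Matrix (Fin n) (Fin n) ℝ) : Prop :=
  A * Ap * A = A ∧ Ap * A * Ap = Ap ∧ (A * Ap)ᵀ = A * Ap ∧ (Ap * A)ᵀ = Ap * A

/-- The point of the `d`-dimensional lattice with basis matrix `C` given by `z : ℤᵈ`. -/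
noncomputable def latPt {n d : ℕ} (C : Matrix (Fin n) (Fin d) ℝ) (z : Fin d → ℤ) : Fin n → ℝ :=
  C.mulVec fun i => (z i : ℝ)

open Function Finset

/-!
Write each nonzero lattice vector as `m • p` with `p` primitive and `m ≥ 1`, and let `k = ⌊t⌋`.
The `k` multiples `a • p` with `k (m - 1) < a ≤ k m` satisfy `a ≤ t m`, so under `A` each of
them weighs at least as much as `m • p` does under `A / t²`, and as `(j, m • p)` varies they are
pairwise distinct; summing gives `k ρ_{A/t²}(Λ \ {0}) ≤ ρ_A(Λ \ {0})`. Since `(A / t²)⁺ = t² A⁺`,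
both sides are Gaussian sums of the form `y ↦ yᵀ A⁺ y`, which is positive definite on
`span Λ ⊆ ran(A)`; this makes `ρ_A(Λ \ {0})` summable.
-/

namespace IsMoorePenrose

variable {n : ℕ} {A B B' : Matrix (Fin n) (Fin n) ℝ}

theorem unique (h : IsMoorePenrose A B) (h' : IsMoorePenrose A B') : B = B' := by
  obtain ⟨h1, h2, h3, h4⟩ := h
  obtain ⟨h1', h2', h3', h4'⟩ := h'
  have hAB : A * B = A * B' := by
    calc A * B = (A * B' * A * B)ᵀ := by rw [h1', h3]
    _ = (A * B)ᵀ * (A * B')ᵀ := by simp only [transpose_mul, mul_assoc]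
    _ = A * B' := by rw [h3, h3', ← mul_assoc, h1]
  have hBA : B * A = B' * A := by
    calc B * A = (B * (A * B' * A))ᵀ := by rw [h1', h4]
    _ = (B' * A)ᵀ * (B * A)ᵀ := by simp only [transpose_mul, mul_assoc]
    _ = B' * A := by rw [h4, h4', mul_assoc, ← mul_assoc A B A, h1]
  calc B = B * A * B := h2.symm
  _ = B' * A * B' := by rw [hBA, mul_assoc, hAB, ← mul_assoc]
  _ = B' := h2'

theorem inv_smul_smul (h : IsMoorePenrose A B) {c : ℝ} (hc : c ≠ 0) :
    IsMoorePenrose (c⁻¹ • A) (c • B) := by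
  obtain ⟨h1, h2, h3, h4⟩ := h
  refine ⟨?_, ?_, ?_, ?_⟩ <;>
    simp [smul_smul, hc, h1, h2, h3, h4]

theorem mulVec_dotProduct_mulVec_mulVec (h : IsMoorePenrose A B) (hA : Aᵀ = A) (u : Fin n → ℝ) :
    A *ᵥ u ⬝ᵥ B *ᵥ (A *ᵥ u) = u ⬝ᵥ A *ᵥ u := by
  conv_lhs => rw [mulVec_mulVec, ← vecMul_transpose A u, hA, ← dotProduct_mulVec,
    mulVec_mulVec, ← mul_assoc, h.1]

theorem dotProduct_mulVec_nonneg (h : IsMoorePenrose A B) (hA : A.PosSemidef) {y : Fin n → ℝ}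
    (hy : y ∈ Set.range A.mulVec) : 0 ≤ y ⬝ᵥ B *ᵥ y := by
  obtain ⟨u, rfl⟩ := hy
  rw [h.mulVec_dotProduct_mulVec_mulVec hA.isHermitian.eq]
  simpa using hA.dotProduct_mulVec_nonneg u

theorem dotProduct_mulVec_pos (h : IsMoorePenrose A B) (hA : A.PosSemidef) {y : Fin n → ℝ}
    (hy : y ∈ Set.range A.mulVec) (hy0 : y ≠ 0) : 0 < y ⬝ᵥ B *ᵥ y := by
  refine (h.dotProduct_mulVec_nonneg hA hy).lt_of_ne fun h0 => hy0 ?_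
  obtain ⟨u, rfl⟩ := hy
  rw [h.mulVec_dotProduct_mulVec_mulVec hA.isHermitian.eq] at h0
  simpa using (hA.dotProduct_mulVec_zero_iff u).mp (by simpa using h0.symm)

end IsMoorePenrose

theorem exists_pos_mul_sq_norm_le {E : Type*} [NormedAddCommGroup E] [NormedSpace ℝ E]
    [FiniteDimensional ℝ E] {F : E → ℝ} (hF : Continuous F) (hpos : ∀ v ≠ 0, 0 < F v)
    (hsmul : ∀ (s : ℝ) v, F (s • v) = s ^ 2 * F v) :
    ∃ c > 0, ∀ v, c * ‖v‖ ^ 2 ≤ F v := by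
  obtain ⟨c, hc, hcF⟩ : ∃ c > 0, ∀ w : E, ‖w‖ = 1 → c ≤ F w := by
    rcases subsingleton_or_nontrivial E with hE | hE
    · exact ⟨1, one_pos, fun w hw => by simp [Subsingleton.elim w 0] at hw⟩
    · obtain ⟨w₀, hw₀, hmin⟩ := (isCompact_sphere (0 : E) 1).exists_isMinOn
        (NormedSpace.sphere_nonempty.mpr zero_le_one) hF.continuousOn
      refine ⟨F w₀, hpos _ (ne_zero_of_mem_unit_sphere ⟨w₀, hw₀⟩), fun w hw => hmin ?_⟩
      exact mem_sphere_zero_iff_norm.mpr hw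
  refine ⟨c, hc, fun v => ?_⟩
  rcases eq_or_ne v 0 with rfl | hv
  · simp [show F 0 = 0 by simpa using hsmul 0 0]
  · have hnv : ‖v‖ ≠ 0 := norm_ne_zero_iff.mpr hv
    calc c * ‖v‖ ^ 2 ≤ F (‖v‖⁻¹ • v) * ‖v‖ ^ 2 := by
          gcongr; exact hcF _ (norm_smul_inv_norm (𝕜 := ℝ) hv)
    _ = F v := by rw [hsmul]; field_simp

theorem summable_pi_prod_of_nonneg {α : Type*} {f : α → ℝ} (hf0 : ∀ a, 0 ≤ f a) (hf : Summable f) :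
    ∀ d : ℕ, Summable fun z : Fin d → α => ∏ i, f (z i)
  | 0 => .of_finite
  | d + 1 => by
    rw [← (Fin.consEquiv fun _ => α).summable_iff]
    refine (hf.mul_of_nonneg (summable_pi_prod_of_nonneg hf0 hf d) hf0
      fun _ => Finset.prod_nonneg fun i _ => hf0 _).congr fun q => ?_
    simp [Fin.consEquiv, Fin.prod_univ_succ]

theorem summable_exp_neg_mul_sum_sq {a : ℝ} (ha : 0 < a) (d : ℕ) :
    Summable fun z : Fin d → ℤ => exp (-(a * ∑ i, (z i : ℝ) ^ 2)) := by
  have h1 : Summable fun m : ℤ => exp (-(a * (m : ℝ) ^ 2)) := by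
    have := summable_pow_mul_jacobiTheta₂_term_bound 0 (div_pos ha pi_pos) 0
    refine this.congr fun m => ?_
    field_simp
    ring_nf
  refine (summable_pi_prod_of_nonneg (fun _ => (exp_pos _).le) h1 d).congr fun z => ?_
  rw [Finset.mul_sum, ← Finset.sum_neg_distrib, exp_sum]

theorem summable_exp_neg_mul_comp_intCast {d : ℕ} {Q : (Fin d → ℝ) → ℝ} (hQ : Continuous Q)
    (hpos : ∀ v ≠ 0, 0 < Q v) (hsmul : ∀ (s : ℝ) v, Q (s • v) = s ^ 2 * Q v) {a : ℝ}
    (ha : 0 < a) : Summable fun z : Fin d → ℤ => exp (-a * Q fun i => z i) := by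
  obtain ⟨c, hc, hcQ⟩ := exists_pos_mul_sq_norm_le (E := EuclideanSpace ℝ (Fin d))
    (hQ.comp (PiLp.continuous_ofLp 2 _)) (fun w hw => hpos _ (by simpa using hw))
    (fun s w => by simp [hsmul])
  refine (summable_exp_neg_mul_sum_sq (mul_pos ha hc) d).of_nonneg_of_le
    (fun _ => (exp_pos _).le) fun z => ?_
  have hz := hcQ (WithLp.toLp 2 fun i => (z i : ℝ))
  rw [EuclideanSpace.real_norm_sq_eq] at hz
  rw [exp_le_exp]
  simp only [Function.comp_apply] at hz
  nlinarith [mul_le_mul_of_nonneg_left hz ha.le]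

section PrimitiveDecomposition

variable {ι : Type*} [Fintype ι]

theorem univ_gcd_pos {z : ι → ℤ} (hz : z ≠ 0) : 0 < univ.gcd z := by
  refine lt_of_le_of_ne (Int.nonneg_of_normalize_eq_self normalize_gcd) fun h => hz ?_
  funext i
  exact gcd_eq_zero_iff.mp h.symm i (mem_univ i)

theorem univ_gcd_smul_div (z : ι → ℤ) : univ.gcd z • (fun i => z i / univ.gcd z) = z := by
  funext i
  exact Int.mul_ediv_cancel' (gcd_dvd (mem_univ i))

theorem univ_gcd_div {z : ι → ℤ} (hz : z ≠ 0) : univ.gcd (fun i => z i / univ.gcd z) = 1 := by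
  obtain ⟨i, hi⟩ := Function.ne_iff.mp hz
  exact gcd_div_eq_one (mem_univ i) hi

theorem univ_gcd_smul {c : ℤ} (hc : 0 ≤ c) (z : ι → ℤ) : univ.gcd (c • z) = c * univ.gcd z := by
  calc univ.gcd (c • z) = univ.gcd fun i => c * z i := rfl
  _ = c * univ.gcd z := by rw [Finset.gcd_mul_left, Int.normalize_of_nonneg hc]

theorem eq_and_eq_of_smul_eq_smul_of_univ_gcd_eq_one {a a' : ℤ} {p p' : ι → ℤ} (ha : 0 < a)
    (ha' : 0 < a') (hp : univ.gcd p = 1) (hp' : univ.gcd p' = 1) (h : a • p = a' • p') :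
    a = a' ∧ p = p' := by
  have haa' : a = a' := by
    have := congrArg univ.gcd h
    rwa [univ_gcd_smul ha.le, univ_gcd_smul ha'.le, hp, hp', mul_one, mul_one] at this
  subst haa'
  exact ⟨rfl, smul_right_injective _ ha.ne' h⟩

theorem eq_and_eq_of_mul_add_eq_mul_add {k j j' m m' : ℤ} (hj : 0 ≤ j ∧ j < k)
    (hj' : 0 ≤ j' ∧ j' < k) (h : k * m + j = k * m' + j') : j = j' ∧ m = m' := by
  have hjj' : j = j' := by
    have := congrArg (· % k) h
    simpa [Int.emod_eq_of_lt hj.1 hj.2, Int.emod_eq_of_lt hj'.1 hj'.2] using this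
  subst hjj'
  exact ⟨rfl, mul_left_cancel₀ (by omega) (add_right_cancel h)⟩

/- Writing `z = m • p` with `m` the gcd of `z`, the pair `(j, z)` goes to
`(k (m - 1) + j + 1) • p`; for fixed `p` these multipliers run through the positive integers
once each. -/
theorem exists_injective_smul_le (k : ℕ) :
    ∃ ψ : Fin k × {z : ι → ℤ // z ≠ 0} → {z : ι → ℤ // z ≠ 0}, Injective ψ ∧
      ∀ q, ∃ (p : ι → ℤ) (a b : ℤ), 0 ≤ a ∧ a ≤ k * b ∧ (ψ q : ι → ℤ) = a • p ∧
        (q.2 : ι → ℤ) = b • p := by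
  set g : (ι → ℤ) → ℤ := fun z => univ.gcd z
  set prim : (ι → ℤ) → ι → ℤ := fun z i => z i / univ.gcd z
  set a : Fin k × {z : ι → ℤ // z ≠ 0} → ℤ := fun q => k * (g q.2 - 1) + q.1 + 1
  have hg (z : {z : ι → ℤ // z ≠ 0}) : 1 ≤ g z := univ_gcd_pos z.2
  have ha (q : Fin k × {z : ι → ℤ // z ≠ 0}) : 0 < a q := by
    have := mul_nonneg (Int.natCast_nonneg k) (sub_nonneg.mpr (hg q.2))
    simp only [a]; omega
  have hprim (z : {z : ι → ℤ // z ≠ 0}) : univ.gcd (prim z) = 1 := univ_gcd_div z.2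
  refine ⟨fun q => ⟨a q • prim q.2, smul_ne_zero (ha q).ne' fun h => ?_⟩, ?_, ?_⟩
  · refine q.2.2 ?_
    calc (q.2 : ι → ℤ) = g q.2 • prim q.2 := (univ_gcd_smul_div _).symm
    _ = 0 := by rw [h, smul_zero]
  · rintro ⟨j, z⟩ ⟨j', z'⟩ h
    obtain ⟨haa', hpp'⟩ := eq_and_eq_of_smul_eq_smul_of_univ_gcd_eq_one (ha _) (ha _) (hprim z)
      (hprim z') (congrArg Subtype.val h)
    obtain ⟨hjj', hgg'⟩ := eq_and_eq_of_mul_add_eq_mul_add (k := k) (m := g z - 1) (m' := g z' - 1)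
      ⟨j.val.cast_nonneg, by exact_mod_cast j.isLt⟩ ⟨j'.val.cast_nonneg, by exact_mod_cast j'.isLt⟩
      (by simp only [a] at haa'; omega)
    have hzz' : (z : ι → ℤ) = z' := by
      rw [← univ_gcd_smul_div (z : ι → ℤ), ← univ_gcd_smul_div (z' : ι → ℤ)]
      exact congrArg₂ (· • ·) (by simp only [g] at hgg'; omega) hpp'
    obtain rfl : j = j' := Fin.ext (by exact_mod_cast hjj')
    obtain rfl : z = z' := Subtype.ext hzz'
    rfl
  · rintro ⟨j, z⟩
    refine ⟨prim z, a (j, z), g z, (ha _).le, ?_, rfl, (univ_gcd_smul_div (z : ι → ℤ)).symm⟩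
    have := j.isLt
    simp only [a]
    linarith

end PrimitiveDecomposition

theorem card_mul_tsum_le_tsum_of_injective {κ T : Type*} [Fintype κ] {f g : T → ℝ}
    (hg : Summable g) (hg0 : ∀ x, 0 ≤ g x) {ψ : κ × T → T} (hψ : Injective ψ)
    (hfg : ∀ i x, f x ≤ g (ψ (i, x))) :
    Fintype.card κ * ∑' x, f x ≤ ∑' x, g x := by
  by_cases hf : Summable f
  · have hgψ : Summable fun q => g (ψ q) := hg.comp_injective hψ
    have hgψi (i : κ) : Summable fun x => g (ψ (i, x)) :=
      hgψ.comp_injective (Prod.mk_right_injective i)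
    calc Fintype.card κ * ∑' x, f x = ∑ _i : κ, ∑' x, f x := by simp
    _ ≤ ∑ i : κ, ∑' x, g (ψ (i, x)) :=
      Finset.sum_le_sum fun i _ => hf.tsum_le_tsum (hfg i) (hgψi i)
    _ = ∑' q, g (ψ q) := by rw [hgψ.tsum_prod' hgψi, tsum_fintype]
    _ ≤ ∑' x, g x := hgψ.tsum_le_tsum_of_inj ψ hψ (fun x _ => hg0 x) (fun _ => le_rfl) hg
  · rw [tsum_eq_zero_of_not_summable hf, mul_zero]
    exact tsum_nonneg hg0

theorem tsum_ne_zero_sq_mul_le_div_floor {ι : Type*} [Fintype ι] {Q : (ι → ℤ) → ℝ}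
    (hQ0 : ∀ z, 0 ≤ Q z) (hQ : ∀ (c : ℤ) z, Q (c • z) = c ^ 2 * Q z) {φ : ℝ → ℝ}
    (hφ : Antitone φ) (hφ0 : ∀ x, 0 ≤ φ x)
    (hsum : Summable fun z : {z : ι → ℤ // z ≠ 0} => φ (Q z)) {t : ℝ} (ht : 1 ≤ t) :
    ∑' z : {z : ι → ℤ // z ≠ 0}, φ (t ^ 2 * Q z) ≤
      (∑' z : {z : ι → ℤ // z ≠ 0}, φ (Q z)) / ⌊t⌋ := by
  have hk : (1 : ℝ) ≤ ⌊t⌋₊ := by exact_mod_cast (Nat.one_le_floor_iff t).mpr ht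
  have hkt : (⌊t⌋₊ : ℝ) ≤ t := Nat.floor_le (by linarith)
  obtain ⟨ψ, hψ, hψQ⟩ := exists_injective_smul_le (ι := ι) ⌊t⌋₊
  rw [← natCast_floor_eq_intCast_floor (by linarith), le_div_iff₀' (by linarith)]
  simpa using card_mul_tsum_le_tsum_of_injective hsum (fun _ => hφ0 _) hψ fun j z => by
    obtain ⟨p, a, b, ha, hab, hψp, hzp⟩ := hψQ (j, z)
    refine hφ ?_
    rw [hψp, hzp, hQ, hQ]
    have hb : (0 : ℝ) ≤ b := by
      have : (0 : ℝ) ≤ ⌊t⌋₊ * b := by exact_mod_cast ha.trans hab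
      nlinarith
    have hat : (a : ℝ) ≤ t * b := by
      calc (a : ℝ) ≤ ⌊t⌋₊ * b := by exact_mod_cast hab
      _ ≤ t * b := by gcongr
    calc (a : ℝ) ^ 2 * Q p ≤ (t * b) ^ 2 * Q p := by
          gcongr
          exact hQ0 p
    _ = t ^ 2 * (b ^ 2 * Q p) := by ring

theorem mulVec_mem_range_of_latPt_mem_range {n d : ℕ} {C : Matrix (Fin n) (Fin d) ℝ}
    {A : Matrix (Fin n) (Fin n) ℝ} (hran : ∀ z, latPt C z ∈ Set.range A.mulVec)
    (v : Fin d → ℝ) : C *ᵥ v ∈ Set.range A.mulVec := by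
  have hcol : Submodule.span ℝ (Set.range C.col) ≤ LinearMap.range A.mulVecLin := by
    refine Submodule.span_le.mpr ?_
    rintro _ ⟨j, rfl⟩
    obtain ⟨u, hu⟩ := hran (Pi.single j 1)
    have hcast : (fun i => ((Pi.single j 1 : Fin d → ℤ) i : ℝ)) = Pi.single j 1 := by
      ext i
      by_cases hij : i = j <;> simp [hij]
    exact ⟨u, by rw [mulVecLin_apply, hu, latPt, hcast, mulVec_single_one]⟩
  exact hcol (C.range_mulVecLin ▸ LinearMap.mem_range_self C.mulVecLin v)

/-- For a lattice `Λ ⊆ ran(A)` with `A ⪰ 0` and `t ≥ 1`,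
`ρ_{A/t²}(Λ \ {0}) ≤ ρ_A(Λ \ {0}) / ⌊t⌋`. -/
theorem stmt2 {n d : ℕ} (C : Matrix (Fin n) (Fin d) ℝ)
    (hC : LinearIndependent ℝ fun j : Fin d => fun i => C i j)
    (A Ap Ap' : Matrix (Fin n) (Fin n) ℝ) (hA : A.PosSemidef)
    (hAp : IsMoorePenrose A Ap)
    (t : ℝ) (ht : 1 ≤ t)
    (hAp' : IsMoorePenrose ((t ^ 2)⁻¹ • A) Ap')
    (hran : ∀ z : Fin d → ℤ, latPt C z ∈ Set.range A.mulVec) :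
    (∑' z : {z : Fin d → ℤ // z ≠ 0},
        Real.exp (-π * (latPt C z.1 ⬝ᵥ Ap'.mulVec (latPt C z.1)))) ≤
      (∑' z : {z : Fin d → ℤ // z ≠ 0},
        Real.exp (-π * (latPt C z.1 ⬝ᵥ Ap.mulVec (latPt C z.1)))) / (⌊t⌋ : ℝ) := by
  obtain rfl : Ap' = t ^ 2 • Ap := hAp'.unique (hAp.inv_smul_smul (by positivity))
  set Q : (Fin d → ℝ) → ℝ := fun v => C *ᵥ v ⬝ᵥ Ap *ᵥ (C *ᵥ v) with hQ
  have hQsmul (s : ℝ) (v : Fin d → ℝ) : Q (s • v) = s ^ 2 * Q v := by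
    simp only [hQ, mulVec_smul, smul_dotProduct, dotProduct_smul, smul_eq_mul]
    ring
  have hQpos (v : Fin d → ℝ) (hv : v ≠ 0) : 0 < Q v :=
    hAp.dotProduct_mulVec_pos hA (mulVec_mem_range_of_latPt_mem_range hran v)
      fun h => hv (mulVec_injective_iff.mpr hC (h.trans (mulVec_zero C).symm))
  have hQint (c : ℤ) (z : Fin d → ℤ) :
      Q (fun i => ((c • z) i : ℝ)) = (c : ℝ) ^ 2 * Q fun i => (z i : ℝ) := by
    rw [← hQsmul]
    congr 1
    ext i
    simp
  have hφ : Antitone fun x => exp (-π * x) := fun x y hxy =>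
    exp_le_exp.mpr (mul_le_mul_of_nonpos_left hxy (by linarith [pi_pos]))
  have key := tsum_ne_zero_sq_mul_le_div_floor (Q := fun z : Fin d → ℤ => Q fun i => z i)
    (fun z => hAp.dotProduct_mulVec_nonneg hA (mulVec_mem_range_of_latPt_mem_range hran _))
    hQint hφ (fun _ => (exp_pos _).le)
    ((summable_exp_neg_mul_comp_intCast (by fun_prop) hQpos hQsmul pi_pos).subtype _) ht
  simpa [hQ, latPt, smul_mulVec] using key
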